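/- Let I = max(0, Y - ξ) where Y ~ N(μ, σ²) with σ > 0. Then E[I] = σ·φ((μ-ξ)/σ) + (μ-ξ)·Φ((μ-ξ)/σ), where φ and Φ are the standard normal pdf and cdf. -/

import Mathlib

/-!
Writing `Y = μ + σ Z` with `Z` standard normal and `d = (μ - ξ) / σ`, the integrand is
`σ · max 0 (Z + d)`, so it suffices to show `E[max 0 (Z + d)] = φ d + d Φ d`. On `{z > -d}` the
integrand is `z φ z + d φ z`; the first term integrates to `φ (-d) = φ d` because `-φ` is an
antiderivative of `z φ z`, and the second to `d Φ d` by the symmetry of `φ`. -/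

open MeasureTheory ProbabilityTheory Real

open Filter Set

/-- Standard normal pdf. -/
noncomputable def stdNormalPdf (z : ℝ) : ℝ := (1 / Real.sqrt (2 * Real.pi)) * Real.exp (-z ^ 2 / 2)

/-- Standard normal cdf. -/
noncomputable def stdNormalCdf (z : ℝ) : ℝ := ∫ u in Set.Iic z, stdNormalPdf u

lemma stdNormalPdf_eq_gaussianPDFReal : stdNormalPdf = gaussianPDFReal 0 1 := by
  funext z
  simp [stdNormalPdf, gaussianPDFReal]

lemma integrable_stdNormalPdf : Integrable stdNormalPdf :=
  stdNormalPdf_eq_gaussianPDFReal ▸ integrable_gaussianPDFReal 0 1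

lemma stdNormalPdf_neg (z : ℝ) : stdNormalPdf (-z) = stdNormalPdf z := by
  simp [stdNormalPdf]

lemma hasDerivAt_neg_stdNormalPdf (z : ℝ) :
    HasDerivAt (fun z => -stdNormalPdf z) (z * stdNormalPdf z) z := by
  have h : HasDerivAt (fun z : ℝ => -z ^ 2 / 2) (-z) z := by
    simpa using ((hasDerivAt_pow 2 z).neg.div_const 2).congr_deriv (by ring)
  refine (h.exp.const_mul (1 / √(2 * π))).neg.congr_deriv ?_
  simp only [stdNormalPdf]
  ring

lemma tendsto_stdNormalPdf_atTop : Tendsto stdNormalPdf atTop (nhds 0) := by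
  have h : Tendsto (fun z : ℝ => -z ^ 2 / 2) atTop atBot :=
    (tendsto_neg_atTop_atBot.comp (tendsto_pow_atTop two_ne_zero)).atBot_div_const two_pos
  have h_exp := (tendsto_exp_atBot.comp h).const_mul (1 / √(2 * π))
  rwa [mul_zero] at h_exp

lemma integrable_mul_stdNormalPdf : Integrable (fun z => z * stdNormalPdf z) := by
  refine ((integrable_mul_exp_neg_mul_sq (b := 1 / 2) (by norm_num)).const_mul
    (1 / √(2 * π))).congr (ae_of_all _ fun z => ?_)
  simp only [stdNormalPdf]
  ring_nf

lemma integral_Ioi_mul_stdNormalPdf (c : ℝ) :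
    ∫ z in Ioi c, z * stdNormalPdf z = stdNormalPdf c := by
  simpa using integral_Ioi_of_hasDerivAt_of_tendsto' (fun z _ => hasDerivAt_neg_stdNormalPdf z)
    integrable_mul_stdNormalPdf.integrableOn tendsto_stdNormalPdf_atTop.neg

lemma integral_Ioi_stdNormalPdf (c : ℝ) : ∫ z in Ioi c, stdNormalPdf z = stdNormalCdf (-c) := by
  rw [stdNormalCdf, ← integral_comp_neg_Ioi]
  simp only [stdNormalPdf_neg]

lemma integral_stdNormalPdf_mul_max_zero_add (d : ℝ) :
    ∫ z, stdNormalPdf z * max 0 (z + d) = stdNormalPdf d + d * stdNormalCdf d := by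
  have h_trunc : ∀ z, stdNormalPdf z * max 0 (z + d)
      = (Ioi (-d)).indicator (fun z => z * stdNormalPdf z + d * stdNormalPdf z) z := by
    intro z
    by_cases hz : -d < z
    · rw [indicator_of_mem (mem_Ioi.mpr hz), max_eq_right (by linarith)]
      ring
    · rw [indicator_of_notMem (notMem_Ioi.mpr (not_lt.mp hz)), max_eq_left (by linarith),
        mul_zero]
  simp_rw [h_trunc]
  rw [integral_indicator measurableSet_Ioi, integral_add integrable_mul_stdNormalPdf.integrableOn
    (integrable_stdNormalPdf.integrableOn.const_mul d), integral_const_mul,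
    integral_Ioi_mul_stdNormalPdf, integral_Ioi_stdNormalPdf, stdNormalPdf_neg, neg_neg]

lemma gaussianReal_eq_map_stdGaussian (μ σ : ℝ) :
    gaussianReal μ ⟨σ ^ 2, sq_nonneg σ⟩ = (gaussianReal 0 1).map (fun z => σ * z + μ) := by
  change _ = (gaussianReal 0 1).map ((· + μ) ∘ (σ * ·))
  rw [← Measure.map_map (measurable_add_const μ) (measurable_const_mul σ),
    gaussianReal_map_const_mul, gaussianReal_map_add_const, mul_zero, zero_add, mul_one]
  rfl

lemma integral_gaussianReal_eq_integral_stdNormalPdf (μ σ : ℝ) {f : ℝ → ℝ}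
    (hf : Measurable f) :
    ∫ y, f y ∂gaussianReal μ ⟨σ ^ 2, sq_nonneg σ⟩ = ∫ z, stdNormalPdf z * f (σ * z + μ) := by
  rw [gaussianReal_eq_map_stdGaussian, integral_map (by fun_prop) hf.aestronglyMeasurable,
    integral_gaussianReal_eq_integral_smul one_ne_zero, stdNormalPdf_eq_gaussianPDFReal]
  rfl

/-- Closed form of the expected improvement: for `Y ~ N(μ, σ²)` with `σ > 0`,
`E[max(0, Y - ξ)] = σ φ((μ-ξ)/σ) + (μ-ξ) Φ((μ-ξ)/σ)`. -/
theorem stmt_0 (μ ξ σ : ℝ) (hσ : 0 < σ) :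
    ∫ y, max 0 (y - ξ) ∂(gaussianReal μ ⟨σ ^ 2, sq_nonneg σ⟩) =
      σ * stdNormalPdf ((μ - ξ) / σ) + (μ - ξ) * stdNormalCdf ((μ - ξ) / σ) := by
  have h_scale : ∀ z, max 0 (σ * z + μ - ξ) = σ * max 0 (z + (μ - ξ) / σ) := by
    intro z
    rw [mul_max_of_nonneg _ _ hσ.le, mul_zero, mul_add, mul_div_cancel₀ _ hσ.ne']
    ring_nf
  rw [integral_gaussianReal_eq_integral_stdNormalPdf μ σ (by fun_prop)]
  simp_rw [h_scale, mul_left_comm _ σ]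
  rw [integral_const_mul, integral_stdNormalPdf_mul_max_zero_add, mul_add, ← mul_assoc,
    mul_div_cancel₀ _ hσ.ne']
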